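/- Let V ⇉ E be a VB-groupoid with core C and core anchor ∂ = t̃|_C: C → E. Define the fat monoid F(V) of pairs (g, b) with b: E_{s(g)} → V_g linear and s̃∘b = id, with multiplication (g₁,b₁)(g₂,b₂) = (g₁g₂, b₁·b₂) where (b₁·b₂)(e) = b₁(t̃(b₂(e))) • b₂(e). Then the formulas Ψ_{(g,b)}(e) = t̃(b(e)) on E and Ψ_{(g,b)}(c) = b(∂c) • c • 0_{g⁻¹} on C define a representation of the category F(V) ⇉ M on the complex ∂: C → E; i.e., Ψ is functorial with respect to multiplication in F(V), and ∂ ∘ Ψ_{(g,b)} = Ψ_{(g,b)} ∘ ∂ on C. -/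

import Mathlib

/-- A groupoid `G ⇉ M` with total (junk-valued outside composables) multiplication. -/
structure RawGroupoid (G M : Type*) where
  s : G → M
  t : G → M
  unit : M → G
  mul : G → G → G
  inv : G → G
  s_unit : ∀ x, s (unit x) = x
  t_unit : ∀ x, t (unit x) = x
  s_mul : ∀ g h, s g = t h → s (mul g h) = s h
  t_mul : ∀ g h, s g = t h → t (mul g h) = t g
  s_inv : ∀ g, s (inv g) = t g
  t_inv : ∀ g, t (inv g) = s g
  mul_assoc : ∀ g h k, s g = t h → s h = t k → mul (mul g h) k = mul g (mul h k)
  mul_unit : ∀ g, mul g (unit (s g)) = g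
  unit_mul : ∀ g, mul (unit (t g)) g = g
  mul_inv : ∀ g, mul g (inv g) = unit (t g)
  inv_mul : ∀ g, mul (inv g) g = unit (s g)

/-- A VB-groupoid `V ⇉ E` over `G ⇉ M`: a groupoid `bV : V ⇉ E` together with vector
bundle structures `V → G`, `E → M` (total, junk-valued, operations `add`, `smul`, `zero`),
such that all groupoid structure maps of `V ⇉ E` are vector bundle morphisms; equivalently,
multiplication by nonnegative scalars is a groupoid morphism.  Compatibility of the
multiplication with the linear structure is the interchange law. -/
structure VBG (V E G M : Type*) where
  bG : RawGroupoid G M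
  bV : RawGroupoid V E
  πV : V → G
  πE : E → M
  add : V → V → V
  smul : ℝ → V → V
  zero : G → V
  addE : E → E → E
  smulE : ℝ → E → E
  zeroE : M → E
  πV_add : ∀ v w, πV v = πV w → πV (add v w) = πV v
  πV_smul : ∀ r v, πV (smul r v) = πV v
  πV_zero : ∀ g, πV (zero g) = g
  πE_add : ∀ e f, πE e = πE f → πE (addE e f) = πE e
  πE_smulE : ∀ r e, πE (smulE r e) = πE e
  πE_zeroE : ∀ x, πE (zeroE x) = x
  -- fiberwise vector space laws (the ones used below)
  add_comm : ∀ v w, πV v = πV w → add v w = add w v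
  add_assoc : ∀ u v w, πV u = πV v → πV v = πV w → add (add u v) w = add u (add v w)
  add_zero : ∀ v, add v (zero (πV v)) = v
  smul_zero : ∀ v, smul 0 v = zero (πV v)
  one_smul : ∀ v, smul 1 v = v
  addE_zero : ∀ e, addE e (zeroE (πE e)) = e
  smulE_zero : ∀ e, smulE 0 e = zeroE (πE e)
  -- structure maps of `V ⇉ E` cover those of `G ⇉ M`
  πE_s : ∀ v, πE (bV.s v) = bG.s (πV v)
  πE_t : ∀ v, πE (bV.t v) = bG.t (πV v)
  πV_unit : ∀ e, πV (bV.unit e) = bG.unit (πE e)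
  πV_mul : ∀ v w, bV.s v = bV.t w → πV (bV.mul v w) = bG.mul (πV v) (πV w)
  πV_inv : ∀ v, πV (bV.inv v) = bG.inv (πV v)
  -- structure maps are linear
  s_add : ∀ v w, πV v = πV w → bV.s (add v w) = addE (bV.s v) (bV.s w)
  t_add : ∀ v w, πV v = πV w → bV.t (add v w) = addE (bV.t v) (bV.t w)
  s_smul : ∀ r v, bV.s (smul r v) = smulE r (bV.s v)
  t_smul : ∀ r v, bV.t (smul r v) = smulE r (bV.t v)
  s_zero : ∀ g, bV.s (zero g) = zeroE (bG.s g)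
  t_zero : ∀ g, bV.t (zero g) = zeroE (bG.t g)
  unit_add : ∀ e f, πE e = πE f → bV.unit (addE e f) = add (bV.unit e) (bV.unit f)
  unit_smul : ∀ r e, bV.unit (smulE r e) = smul r (bV.unit e)
  unit_zero : ∀ x, bV.unit (zeroE x) = zero (bG.unit x)
  inv_add : ∀ v w, πV v = πV w → bV.inv (add v w) = add (bV.inv v) (bV.inv w)
  inv_smul : ∀ r v, bV.inv (smul r v) = smul r (bV.inv v)
  inv_zero : ∀ g, bV.inv (zero g) = zero (bG.inv g)
  -- interchange law: multiplication is a vector bundle morphism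
  interchange : ∀ v₁ v₂ w₁ w₂, bV.s v₁ = bV.t v₂ → bV.s w₁ = bV.t w₂ →
    πV v₁ = πV w₁ → πV v₂ = πV w₂ →
    bV.mul (add v₁ w₁) (add v₂ w₂) = add (bV.mul v₁ v₂) (bV.mul w₁ w₂)
  mul_smul : ∀ r v w, bV.s v = bV.t w → bV.mul (smul r v) (smul r w) = smul r (bV.mul v w)
  -- fiberwise surjectivity of the source map of `V ⇉ E` over the source of `G ⇉ M`
  sSurj : ∀ (g : G) (e : E), πE e = bG.s g → ∃ v, πV v = g ∧ bV.s v = e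

/-- An element of the core `C_x` of a VB-groupoid: an element of `V` over the unit `1_x`
whose source is zero. -/
def VBG.IsCore {V E G M : Type*} (𝒱 : VBG V E G M) (x : M) (c : V) : Prop :=
  𝒱.πV c = 𝒱.bG.unit x ∧ 𝒱.bV.s c = 𝒱.zeroE x

/-- A pointwise splitting `(g, b)` of the core exact sequence of a VB-groupoid:
a linear right inverse `b : E_{s(g)} → V_g` of `s̃`.  (An element of the fat category
`F(V)`.) -/
structure VBG.Splitting {V E G M : Type*} (𝒱 : VBG V E G M) (g : G) where
  b : E → V
  over' : ∀ e, 𝒱.πE e = 𝒱.bG.s g → 𝒱.πV (b e) = g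
  sec : ∀ e, 𝒱.πE e = 𝒱.bG.s g → 𝒱.bV.s (b e) = e
  lin_add : ∀ e f, 𝒱.πE e = 𝒱.bG.s g → 𝒱.πE f = 𝒱.bG.s g →
    b (𝒱.addE e f) = 𝒱.add (b e) (b f)
  lin_smul : ∀ r e, 𝒱.πE e = 𝒱.bG.s g → b (𝒱.smulE r e) = 𝒱.smul r (b e)

/-- The multiplication of the fat category:
`(b₁ · b₂)(e) = b₁(t̃(b₂(e))) • b₂(e)`. -/
def VBG.fatMul {V E G M : Type*} (𝒱 : VBG V E G M) (b₁ b₂ : E → V) : E → V :=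
  fun e => 𝒱.bV.mul (b₁ (𝒱.bV.t (b₂ e))) (b₂ e)

/-- The fat representation on the side bundle `E`:  `Ψ_{(g,b)}(e) = t̃(b(e))`. -/
def VBG.ΨE {V E G M : Type*} (𝒱 : VBG V E G M) (b : E → V) : E → E :=
  fun e => 𝒱.bV.t (b e)

/-- The fat representation on the core `C`:
`Ψ_{(g,b)}(c) = b(∂c) • c • 0_{g⁻¹}`,  where `∂ = t̃|_C` is the core anchor. -/
def VBG.ΨC {V E G M : Type*} (𝒱 : VBG V E G M) (g : G) (b : E → V) : V → V :=
  fun c => 𝒱.bV.mul (𝒱.bV.mul (b (𝒱.bV.t c)) c) (𝒱.zero (𝒱.bG.inv g))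

/-!
Everything is bookkeeping with the groupoid axioms of `V ⇉ E`, plus two uses of its linear
structure. First, the zero section is multiplicative: if `v` lifts `0_{t(b)}` along `s̃`, then
`0_a • 0_b = (0·v) • (0·0_b) = 0·(v • 0_b) = 0_{ab}`. So `0_{(g₁g₂)⁻¹} = 0_{g₂⁻¹} • 0_{g₁⁻¹}`, and
functoriality on the core reduces to associativity: with `B = b₂(∂c)` and `A = b₁(t̃ B)`, both
sides equal `A • B • c • 0_{g₂⁻¹} • 0_{g₁⁻¹}`. Second, the interchange law makes `b₁ · b₂`
linear, so it is again a splitting.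
-/

namespace RawGroupoid

variable {G M : Type*} (𝒢 : RawGroupoid G M)

theorem eq_inv_of_mul_eq_unit {g h : G} (hc : 𝒢.s g = 𝒢.t h)
    (hm : 𝒢.mul g h = 𝒢.unit (𝒢.t g)) : h = 𝒢.inv g :=
  calc h = 𝒢.mul (𝒢.unit (𝒢.t h)) h := (𝒢.unit_mul h).symm
    _ = 𝒢.mul (𝒢.mul (𝒢.inv g) g) h := by rw [← hc, ← 𝒢.inv_mul g]
    _ = 𝒢.mul (𝒢.inv g) (𝒢.mul g h) := 𝒢.mul_assoc _ _ _ (𝒢.s_inv g) hc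
    _ = 𝒢.mul (𝒢.inv g) (𝒢.unit (𝒢.s (𝒢.inv g))) := by rw [hm, 𝒢.s_inv]
    _ = 𝒢.inv g := 𝒢.mul_unit _

theorem mul_inv_rev {g h : G} (hc : 𝒢.s g = 𝒢.t h) :
    𝒢.inv (𝒢.mul g h) = 𝒢.mul (𝒢.inv h) (𝒢.inv g) := by
  have hinv : 𝒢.s (𝒢.inv h) = 𝒢.t (𝒢.inv g) := by rw [𝒢.s_inv, 𝒢.t_inv, hc]
  have hgh : 𝒢.s (𝒢.mul g h) = 𝒢.t (𝒢.inv h) := by rw [𝒢.s_mul g h hc, 𝒢.t_inv]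
  refine (𝒢.eq_inv_of_mul_eq_unit ?_ ?_).symm
  · rw [𝒢.s_mul g h hc, 𝒢.t_mul _ _ hinv, 𝒢.t_inv]
  · calc 𝒢.mul (𝒢.mul g h) (𝒢.mul (𝒢.inv h) (𝒢.inv g))
        = 𝒢.mul (𝒢.mul g (𝒢.mul h (𝒢.inv h))) (𝒢.inv g) := by
          rw [← 𝒢.mul_assoc _ _ _ hgh hinv, 𝒢.mul_assoc g h _ hc (𝒢.t_inv h).symm]
      _ = 𝒢.unit (𝒢.t (𝒢.mul g h)) := by
          rw [𝒢.mul_inv h, ← hc, 𝒢.mul_unit, 𝒢.mul_inv, 𝒢.t_mul g h hc]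

end RawGroupoid

namespace VBG

variable {V E G M : Type*} (𝒱 : VBG V E G M)

theorem zero_mul_zero {a b : G} (hc : 𝒱.bG.s a = 𝒱.bG.t b) :
    𝒱.bV.mul (𝒱.zero a) (𝒱.zero b) = 𝒱.zero (𝒱.bG.mul a b) := by
  obtain ⟨v, hv, hsv⟩ := 𝒱.sSurj a (𝒱.zeroE (𝒱.bG.t b)) (by rw [𝒱.πE_zeroE, hc])
  have hcomp : 𝒱.bV.s v = 𝒱.bV.t (𝒱.zero b) := by rw [hsv, 𝒱.t_zero]
  calc 𝒱.bV.mul (𝒱.zero a) (𝒱.zero b)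
      = 𝒱.bV.mul (𝒱.smul 0 v) (𝒱.smul 0 (𝒱.zero b)) := by
        rw [𝒱.smul_zero, 𝒱.smul_zero, hv, 𝒱.πV_zero]
    _ = 𝒱.smul 0 (𝒱.bV.mul v (𝒱.zero b)) := 𝒱.mul_smul 0 v (𝒱.zero b) hcomp
    _ = 𝒱.zero (𝒱.bG.mul a b) := by rw [𝒱.smul_zero, 𝒱.πV_mul v _ hcomp, hv, 𝒱.πV_zero]

theorem zero_inv_mul {g₁ g₂ : G} (hg : 𝒱.bG.s g₁ = 𝒱.bG.t g₂) :
    𝒱.zero (𝒱.bG.inv (𝒱.bG.mul g₁ g₂))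
      = 𝒱.bV.mul (𝒱.zero (𝒱.bG.inv g₂)) (𝒱.zero (𝒱.bG.inv g₁)) := by
  rw [𝒱.bG.mul_inv_rev hg, 𝒱.zero_mul_zero (by rw [𝒱.bG.s_inv, 𝒱.bG.t_inv, hg])]

theorem t_zero_inv (g : G) : 𝒱.bV.t (𝒱.zero (𝒱.bG.inv g)) = 𝒱.zeroE (𝒱.bG.s g) := by
  rw [𝒱.t_zero, 𝒱.bG.t_inv]

variable {𝒱}

theorem IsCore.πE_t {x : M} {c : V} (hc : 𝒱.IsCore x c) : 𝒱.πE (𝒱.bV.t c) = x := by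
  rw [𝒱.πE_t, hc.1, 𝒱.bG.t_unit]

namespace Splitting

variable {g : G} (b : 𝒱.Splitting g)

theorem πE_t_apply {e : E} (he : 𝒱.πE e = 𝒱.bG.s g) :
    𝒱.πE (𝒱.bV.t (b.b e)) = 𝒱.bG.t g := by
  rw [𝒱.πE_t, b.over' e he]

def mul {g₁ g₂ : G} (hg : 𝒱.bG.s g₁ = 𝒱.bG.t g₂) (b₁ : 𝒱.Splitting g₁)
    (b₂ : 𝒱.Splitting g₂) : 𝒱.Splitting (𝒱.bG.mul g₁ g₂) where
  b := 𝒱.fatMul b₁.b b₂.b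
  over' e he := by
    rw [𝒱.bG.s_mul _ _ hg] at he
    have he₁ := hg ▸ b₂.πE_t_apply he
    rw [fatMul, 𝒱.πV_mul _ _ (b₁.sec _ he₁), b₁.over' _ he₁, b₂.over' e he]
  sec e he := by
    rw [𝒱.bG.s_mul _ _ hg] at he
    rw [fatMul, 𝒱.bV.s_mul _ _ (b₁.sec _ (hg ▸ b₂.πE_t_apply he)), b₂.sec e he]
  lin_add e f he hf := by
    rw [𝒱.bG.s_mul _ _ hg] at he hf
    have he₁ := hg ▸ b₂.πE_t_apply he
    have hf₁ := hg ▸ b₂.πE_t_apply hf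
    have hπ₂ : 𝒱.πV (b₂.b e) = 𝒱.πV (b₂.b f) := by rw [b₂.over' e he, b₂.over' f hf]
    simp only [fatMul]
    rw [b₂.lin_add e f he hf, 𝒱.t_add _ _ hπ₂, b₁.lin_add _ _ he₁ hf₁]
    exact 𝒱.interchange _ _ _ _ (b₁.sec _ he₁) (b₁.sec _ hf₁)
      (by rw [b₁.over' _ he₁, b₁.over' _ hf₁]) hπ₂
  lin_smul r e he := by
    rw [𝒱.bG.s_mul _ _ hg] at he
    have he₁ := hg ▸ b₂.πE_t_apply he
    simp only [fatMul]
    rw [b₂.lin_smul r e he, 𝒱.t_smul, b₁.lin_smul r _ he₁]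
    exact 𝒱.mul_smul r _ _ (b₁.sec _ he₁)

theorem s_apply_t {c : V} (hc : 𝒱.IsCore (𝒱.bG.s g) c) : 𝒱.bV.s (b.b (𝒱.bV.t c)) = 𝒱.bV.t c :=
  b.sec _ hc.πE_t

theorem s_apply_t_mul {c : V} (hc : 𝒱.IsCore (𝒱.bG.s g) c) :
    𝒱.bV.s (𝒱.bV.mul (b.b (𝒱.bV.t c)) c) = 𝒱.bV.t (𝒱.zero (𝒱.bG.inv g)) := by
  rw [𝒱.bV.s_mul _ _ (b.s_apply_t hc), hc.2, 𝒱.t_zero_inv]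

theorem isCore_ΨC {c : V} (hc : 𝒱.IsCore (𝒱.bG.s g) c) :
    𝒱.IsCore (𝒱.bG.t g) (𝒱.ΨC g b.b c) := by
  have hcomp := b.s_apply_t_mul hc
  constructor
  · rw [ΨC, 𝒱.πV_mul _ _ hcomp, 𝒱.πV_mul _ _ (b.s_apply_t hc), b.over' _ hc.πE_t, hc.1,
      𝒱.bG.mul_unit, 𝒱.πV_zero, 𝒱.bG.mul_inv]
  · rw [ΨC, 𝒱.bV.s_mul _ _ hcomp, 𝒱.s_zero, 𝒱.bG.s_inv]

theorem t_ΨC {c : V} (hc : 𝒱.IsCore (𝒱.bG.s g) c) :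
    𝒱.bV.t (𝒱.ΨC g b.b c) = 𝒱.ΨE b.b (𝒱.bV.t c) := by
  rw [ΨC, 𝒱.bV.t_mul _ _ (b.s_apply_t_mul hc), 𝒱.bV.t_mul _ _ (b.s_apply_t hc), ΨE]

variable {g₁ g₂ : G} (hg : 𝒱.bG.s g₁ = 𝒱.bG.t g₂) (b₁ : 𝒱.Splitting g₁) (b₂ : 𝒱.Splitting g₂)
include hg

theorem ΨE_fatMul {e : E} (he : 𝒱.πE e = 𝒱.bG.s g₂) :
    𝒱.ΨE (𝒱.fatMul b₁.b b₂.b) e = 𝒱.ΨE b₁.b (𝒱.ΨE b₂.b e) :=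
  𝒱.bV.t_mul _ _ (b₁.sec _ (hg ▸ b₂.πE_t_apply he))

theorem ΨC_fatMul {c : V} (hc : 𝒱.IsCore (𝒱.bG.s g₂) c) :
    𝒱.ΨC (𝒱.bG.mul g₁ g₂) (𝒱.fatMul b₁.b b₂.b) c = 𝒱.ΨC g₁ b₁.b (𝒱.ΨC g₂ b₂.b c) := by
  set B := b₂.b (𝒱.bV.t c)
  set A := b₁.b (𝒱.bV.t B)
  set z₁ := 𝒱.zero (𝒱.bG.inv g₁)
  set z₂ := 𝒱.zero (𝒱.bG.inv g₂)
  have hB : 𝒱.bV.s B = 𝒱.bV.t c := b₂.s_apply_t hc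
  have hA : 𝒱.bV.s A = 𝒱.bV.t B := b₁.sec _ (hg ▸ b₂.πE_t_apply hc.πE_t)
  have hBc : 𝒱.bV.s (𝒱.bV.mul B c) = 𝒱.bV.t z₂ := b₂.s_apply_t_mul hc
  have hz : 𝒱.bV.s z₂ = 𝒱.bV.t z₁ := by rw [𝒱.s_zero, 𝒱.bG.s_inv, 𝒱.t_zero_inv, hg]
  have hABc : 𝒱.bV.s (𝒱.bV.mul A (𝒱.bV.mul B c)) = 𝒱.bV.t z₂ := by
    rw [𝒱.bV.s_mul _ _ (by rwa [𝒱.bV.t_mul _ _ hB]), hBc]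
  calc 𝒱.bV.mul (𝒱.bV.mul (𝒱.bV.mul A B) c) (𝒱.zero (𝒱.bG.inv (𝒱.bG.mul g₁ g₂)))
      = 𝒱.bV.mul (𝒱.bV.mul (𝒱.bV.mul A (𝒱.bV.mul B c)) z₂) z₁ := by
        rw [𝒱.zero_inv_mul hg, 𝒱.bV.mul_assoc A B c hA hB, 𝒱.bV.mul_assoc _ _ _ hABc hz]
    _ = 𝒱.bV.mul (𝒱.bV.mul A (𝒱.bV.mul (𝒱.bV.mul B c) z₂)) z₁ := by
        rw [𝒱.bV.mul_assoc A _ z₂ (by rwa [𝒱.bV.t_mul _ _ hB]) hBc]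
    _ = 𝒱.ΨC g₁ b₁.b (𝒱.ΨC g₂ b₂.b c) := by
        conv_rhs => rw [ΨC]
        rw [b₂.t_ΨC hc]; rfl

end Splitting

end VBG

theorem fat_representation
    {V E G M : Type*} (𝒱 : VBG V E G M)
    (g₁ g₂ : G) (hg : 𝒱.bG.s g₁ = 𝒱.bG.t g₂)
    (b₁ : 𝒱.Splitting g₁) (b₂ : 𝒱.Splitting g₂) :
    -- (0) `b₁ · b₂` is a splitting over `g₁ g₂`
    (∀ e, 𝒱.πE e = 𝒱.bG.s (𝒱.bG.mul g₁ g₂) →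
      𝒱.πV (𝒱.fatMul b₁.b b₂.b e) = 𝒱.bG.mul g₁ g₂
      ∧ 𝒱.bV.s (𝒱.fatMul b₁.b b₂.b e) = e)
    ∧
    -- (1) `Ψ` preserves the core
    (∀ (g : G) (b : 𝒱.Splitting g) (c : V), 𝒱.IsCore (𝒱.bG.s g) c →
      𝒱.IsCore (𝒱.bG.t g) (𝒱.ΨC g b.b c))
    ∧
    -- (2) functoriality of `Ψ` on `E`
    (∀ e, 𝒱.πE e = 𝒱.bG.s g₂ →
      𝒱.ΨE (𝒱.fatMul b₁.b b₂.b) e = 𝒱.ΨE b₁.b (𝒱.ΨE b₂.b e))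
    ∧
    -- (3) functoriality of `Ψ` on the core `C`
    (∀ c : V, 𝒱.IsCore (𝒱.bG.s g₂) c →
      𝒱.ΨC (𝒱.bG.mul g₁ g₂) (𝒱.fatMul b₁.b b₂.b) c
        = 𝒱.ΨC g₁ b₁.b (𝒱.ΨC g₂ b₂.b c))
    ∧
    -- (4) `∂ ∘ Ψ = Ψ ∘ ∂` on the core (`∂ = t̃|_C`)
    (∀ (g : G) (b : 𝒱.Splitting g) (c : V), 𝒱.IsCore (𝒱.bG.s g) c →
      𝒱.bV.t (𝒱.ΨC g b.b c) = 𝒱.ΨE b.b (𝒱.bV.t c)) := by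
  refine ⟨fun e he => ⟨(b₁.mul hg b₂).over' e he, (b₁.mul hg b₂).sec e he⟩,
    fun g b c hc => b.isCore_ΨC hc, fun e he => b₁.ΨE_fatMul hg b₂ he,
    fun c hc => b₁.ΨC_fatMul hg b₂ hc, fun g b c hc => b.t_ΨC hc⟩
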